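/- arXiv:1704.07625 — 5 statements merged into one kernel-verified Lean document; each statement's English description precedes it below -/
import Mathlib

section
/- Let X be a weighted sequence of length n over a finite alphabet Σ, let z ≥ 1 be real, and fix a position i ∈ {1,…,n}. There exists a unique multiset M of strings over Σ such that every string P is a prefix of exactly ⌊z·P_X(P,i)⌋ elements of M (counted with multiplicity); namely, M is the multiset in which each string P has multiplicity m_i(P) = t_i(P) − Σ_{c∈Σ} t_i(Pc). -/
open scoped Classical
open Finset

variable {α : Type*}

/-- Matching probability `P_X(P,i)` of pattern `P` at (1-based) position `i`
in a weighted sequence of length `n` with letter probabilities `p`. -/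
def matchProb (n : ℕ) (p : ℕ → α → ℝ) : List α → ℕ → ℝ
  | [], _ => 1
  | c :: P, i => if i ≤ n then p i c * matchProb n p P (i + 1) else 0

/-- `p` describes a weighted sequence of length `n`: at each position `i ∈ {1,…,n}`
the letter probabilities are nonnegative and sum to 1. -/
def IsWeighted [Fintype α] (n : ℕ) (p : ℕ → α → ℝ) : Prop :=
  ∀ i, 1 ≤ i → i ≤ n → (∀ c, 0 ≤ p i c) ∧ ∑ c, p i c = 1

/-- A property array for strings of length `n`:
`π i ∈ {i-1,…,n}` for `i ∈ {1,…,n}` and `π` is nondecreasing on `{1,…,n}`. -/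
def IsPropertyArray (n : ℕ) (π : ℕ → ℕ) : Prop :=
  (∀ i, 1 ≤ i → i ≤ n → i - 1 ≤ π i ∧ π i ≤ n) ∧
    ∀ i, 1 ≤ i → i + 1 ≤ n → π i ≤ π (i + 1)

/-- The factor `S[i..j]` (1-based, empty when `j < i`). -/
def factor (S : List α) (i j : ℕ) : List α := (S.drop (i - 1)).take (j + 1 - i)

/-- `i ∈ Occ_π(P,S)`: `P = S[i..i+|P|-1]` and `i+|P|-1 ≤ π i`. -/
def occursAt (S : List α) (π : ℕ → ℕ) (P : List α) (i : ℕ) : Prop :=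
  factor S i (i + P.length - 1) = P ∧ i + P.length - 1 ≤ π i

/-- `Count_𝒮(P,i)`: number of members of the family in which `P` occurs at `i`
respecting the property. -/
noncomputable def countOcc {k : ℕ} (S : Fin k → List α) (π : Fin k → ℕ → ℕ)
    (P : List α) (i : ℕ) : ℕ :=
  (Finset.univ.filter fun j => occursAt (S j) (π j) P i).card

/-- `P` is compatible with `Q` if `P = ε` or `P = cQ'` for a letter `c` and a prefix `Q'` of `Q`. -/
def Compatible (P Q : List α) : Prop :=
  P = [] ∨ ∃ (c : α) (Q' : List α), Q' <+: Q ∧ P = c :: Q'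

/-- A random string `S : Fin n → α` matches pattern `P` at (1-based) position `i`. -/
def Matches {n : ℕ} (S : Fin n → α) (P : List α) (i : ℕ) : Prop :=
  ((List.ofFn S).drop (i - 1)).take P.length = P

/-- The probability of the outcome `S` under the product distribution determined by `p`. -/
def strWeight (n : ℕ) (p : ℕ → α → ℝ) (S : Fin n → α) : ℝ :=
  ∏ j : Fin n, p ((j : ℕ) + 1) (S j)

/-! The prefix counts `t P = ⌊z·P_X(P,i)⌋` satisfy `∑_c t (P c) ≤ t P` and vanish on strings
longer than `n`. In any multiset `M`, an element with prefix `P` is either `P` itself or has exactly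
one `P c` as a prefix, so `#{Q ∈ M | P <+: Q} = count P M + ∑_c #{Q ∈ M | P c <+: Q}`. Hence
prefix counts `t` force `count P M = t P - ∑_c t (P c)`, and conversely the multiset with these
multiplicities has prefix counts `t`, by downward induction on `|P|`. -/

section WeightedSequence

variable {n : ℕ} {p : ℕ → α → ℝ}

theorem matchProb_cons_eq_zero (c : α) {P : List α} {i : ℕ} (h : n < i + P.length) :
    matchProb n p (c :: P) i = 0 := by
  induction P generalizing c i with
  | nil => simp [matchProb, show ¬i ≤ n by simpa using h]
  | cons d P ih =>
    rw [matchProb, ih d (by simp at h; omega), mul_zero, ite_self]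

variable [Fintype α]

theorem matchProb_nonneg (hp : IsWeighted n p) (P : List α) {i : ℕ} (hi : 1 ≤ i) :
    0 ≤ matchProb n p P i := by
  induction P generalizing i with
  | nil => simp [matchProb]
  | cons c P ih =>
    rw [matchProb]
    split_ifs with hin
    · exact mul_nonneg ((hp i hi hin).1 c) (ih (by omega))
    · rfl

theorem sum_matchProb_append_singleton_le (hp : IsWeighted n p) (P : List α) {i : ℕ}
    (hi : 1 ≤ i) : ∑ c, matchProb n p (P ++ [c]) i ≤ matchProb n p P i := by
  induction P generalizing i with
  | nil =>
    simp only [List.nil_append, matchProb, mul_one]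
    split_ifs with hin
    · exact (hp i hi hin).2.le
    · simp
  | cons d P ih =>
    simp only [List.cons_append, matchProb]
    split_ifs with hin
    · rw [← Finset.mul_sum]
      exact mul_le_mul_of_nonneg_left (ih (by omega)) ((hp i hi hin).1 d)
    · simp

end WeightedSequence

theorem Finset.sum_floor_le_floor_sum {ι R : Type*} [Semiring R] [LinearOrder R]
    [IsStrictOrderedRing R] [FloorSemiring R] (s : Finset ι) {f : ι → R}
    (hf : ∀ j ∈ s, 0 ≤ f j) : ∑ j ∈ s, ⌊f j⌋₊ ≤ ⌊∑ j ∈ s, f j⌋₊ :=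
  Nat.le_floor <| by
    push_cast
    exact Finset.sum_le_sum fun j hj => Nat.floor_le (hf j hj)

section PrefixCounts

variable [Fintype α]

theorem List.ite_prefix_eq_ite_eq_add_sum (P Q : List α) :
    (if P <+: Q then 1 else 0 : ℕ) =
      (if P = Q then 1 else 0) + ∑ c : α, if P ++ [c] <+: Q then 1 else 0 := by
  by_cases h : P <+: Q
  · obtain ⟨T, rfl⟩ := h
    cases T with
    | nil =>
      have hc : ∀ c : α, ¬ P ++ [c] <+: P := fun c hc => by simpa using hc.length_le
      simp [hc]
    | cons d T => simp [List.prefix_append_right_inj, eq_comm]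
  · have hne : P ≠ Q := by rintro rfl; exact h (List.prefix_refl P)
    have hc : ∀ c : α, ¬ P ++ [c] <+: Q := fun c hc => h ((List.prefix_append P [c]).trans hc)
    simp [h, hne, hc]

theorem Multiset.countP_prefix_eq_count_add_sum (M : Multiset (List α)) (P : List α) :
    M.countP (P <+: ·) = M.count P + ∑ c : α, M.countP (P ++ [c] <+: ·) := by
  induction M using Multiset.induction_on with
  | empty => simp
  | cons Q M ih =>
    simp only [Multiset.countP_cons, Multiset.count_cons, Finset.sum_add_distrib, ih,
      List.ite_prefix_eq_ite_eq_add_sum P Q]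
    ring

variable (t : List α → ℕ)

theorem Multiset.count_add_sum_eq_of_countP_prefix {M : Multiset (List α)}
    (hM : ∀ P, M.countP (P <+: ·) = t P) (P : List α) :
    M.count P + ∑ c : α, t (P ++ [c]) = t P := by
  simp only [← hM, Multiset.countP_prefix_eq_count_add_sum M P]

theorem existsUnique_multiset_countP_prefix (hsub : ∀ P, ∑ c : α, t (P ++ [c]) ≤ t P)
    {D : ℕ} (hD : ∀ P : List α, D < P.length → t P = 0) :
    ∃! M : Multiset (List α), ∀ P, M.countP (P <+: ·) = t P := by
  set m : List α → ℕ := fun P => t P - ∑ c : α, t (P ++ [c])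
  have hm_short : ∀ P, m P ≠ 0 → P.length ≤ D := fun P hP => by
    by_contra hlen
    exact hP (by simp [m, hD P (not_le.mp hlen)])
  have hm : (Function.support m).Finite := (List.finite_length_le α D).subset hm_short
  set M := Finsupp.toMultiset (Finsupp.ofSupportFinite m hm)
  have hcount : ∀ P, M.count P = m P := fun P => by
    rw [Finsupp.count_toMultiset, Finsupp.ofSupportFinite_coe]
  have hprefix : ∀ k P, D < P.length + k → M.countP (P <+: ·) = t P := by
    intro k
    induction k with
    | zero =>
      intro P hP
      rw [hD P hP, Multiset.countP_eq_zero]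
      intro Q hQ hPQ
      have := hm_short Q (by rw [← hcount]; exact Multiset.count_ne_zero.mpr hQ)
      have := hPQ.length_le
      omega
    | succ k ih =>
      intro P hP
      rw [Multiset.countP_prefix_eq_count_add_sum, hcount,
        Finset.sum_congr rfl fun c _ => ih (P ++ [c]) (by simp; omega)]
      exact Nat.sub_add_cancel (hsub P)
  refine ⟨M, fun P => hprefix (D + 1) P (by omega), fun M' hM' => Multiset.ext.mpr fun P => ?_⟩
  have h' := Multiset.count_add_sum_eq_of_countP_prefix t hM' P
  have h := Multiset.count_add_sum_eq_of_countP_prefix t (fun P => hprefix (D + 1) P (by omega)) P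
  omega

end PrefixCounts

theorem exists_unique_multiset_prefix_counts_general [Fintype α]
    (n : ℕ) (p : ℕ → α → ℝ) (hp : IsWeighted n p) (z : ℝ) (hz : 1 ≤ z)
    (i : ℕ) (hi1 : 1 ≤ i) :
    (∃! M : Multiset (List α),
      ∀ P : List α,
        (M.filter fun Q => P <+: Q).card = ⌊z * matchProb n p P i⌋₊) ∧
    ∀ M : Multiset (List α),
      (∀ P : List α,
        (M.filter fun Q => P <+: Q).card = ⌊z * matchProb n p P i⌋₊) →
      ∀ P : List α,
        (M.count P : ℤ) =
          ⌊z * matchProb n p P i⌋ - ∑ c : α, ⌊z * matchProb n p (P ++ [c]) i⌋ := by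
  have hnonneg (P : List α) : 0 ≤ z * matchProb n p P i :=
    mul_nonneg (by linarith) (matchProb_nonneg hp P hi1)
  have hsub (P : List α) :
      ∑ c : α, ⌊z * matchProb n p (P ++ [c]) i⌋₊ ≤ ⌊z * matchProb n p P i⌋₊ :=
    (Finset.univ.sum_floor_le_floor_sum fun c _ => hnonneg (P ++ [c])).trans <|
      Nat.floor_le_floor <| by
        rw [← Finset.mul_sum]
        exact mul_le_mul_of_nonneg_left (sum_matchProb_append_singleton_le hp P hi1)
          (by linarith)
  have hlong (P : List α) (hP : n < P.length) : ⌊z * matchProb n p P i⌋₊ = 0 := by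
    obtain ⟨c, P, rfl⟩ := List.exists_cons_of_length_pos (by omega : 0 < P.length)
    rw [matchProb_cons_eq_zero c (by simp at hP; omega), mul_zero, Nat.floor_zero]
  simp only [← Multiset.countP_eq_card_filter]
  refine ⟨existsUnique_multiset_countP_prefix _ hsub hlong, fun M hM P => ?_⟩
  have h := Multiset.count_add_sum_eq_of_countP_prefix _ hM P
  simp only [← Int.natCast_floor_eq_floor (hnonneg _)]
  push_cast [← h]
  ring

/-- there is a unique multiset `M` such that every string `P` is a prefix of
exactly `⌊z·P_X(P,i)⌋` elements of `M`; namely the multiset in which each `P` has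
multiplicity `m_i(P) = t_i(P) - Σ_c t_i(Pc)`. -/
theorem exists_unique_multiset_prefix_counts [Fintype α]
    (n : ℕ) (p : ℕ → α → ℝ) (hp : IsWeighted n p) (z : ℝ) (hz : 1 ≤ z)
    (i : ℕ) (hi1 : 1 ≤ i) (hin : i ≤ n) :
    (∃! M : Multiset (List α),
      ∀ P : List α,
        (M.filter fun Q => P <+: Q).card = ⌊z * matchProb n p P i⌋₊) ∧
    ∀ M : Multiset (List α),
      (∀ P : List α,
        (M.filter fun Q => P <+: Q).card = ⌊z * matchProb n p P i⌋₊) →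
      ∀ P : List α,
        (M.count P : ℤ) =
          ⌊z * matchProb n p P i⌋ - ∑ c : α, ⌊z * matchProb n p (P ++ [c]) i⌋ :=
  exists_unique_multiset_prefix_counts_general n p hp z hz i hi1
end

section
/- Let X be a weighted sequence of length n over a finite alphabet Σ and let z ≥ 1 be real. For every position i ∈ {1,…,n}, the total multiplicity of the multiset M_i equals ⌊z⌋; that is, Σ_P m_i(P) = ⌊z⌋, where the sum ranges over all strings P over Σ (only finitely many terms are nonzero). -/
/-! `P_X(P, i)` vanishes as soon as `P` runs past position `n`, so only strings of length at most
`n + 1 - i` contribute. Every nonempty string is uniquely of the form `Pc`, so the terms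
`Σ_c t_i(Pc)` subtracted in `Σ_P m_i(P)` are exactly the `t_i(Q)` of the nonempty strings `Q`,
and the sum telescopes to `t_i(ε) = ⌊z⌋`. -/

open scoped Classical
open Finset

variable {α : Type*}

noncomputable def listsLengthLE (α : Type*) [Finite α] (k : ℕ) : Finset (List α) :=
  (List.finite_length_le α k).toFinset

@[simp]
theorem mem_listsLengthLE [Finite α] {k : ℕ} {Q : List α} :
    Q ∈ listsLengthLE α k ↔ Q.length ≤ k := by
  simp [listsLengthLE]

theorem sum_listsLengthLE_succ [Fintype α] {M : Type*} [AddCommMonoid M] (f : List α → M)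
    (k : ℕ) :
    ∑ Q ∈ listsLengthLE α (k + 1), f Q = f [] + ∑ P ∈ listsLengthLE α k, ∑ c, f (P ++ [c]) := by
  have hnil : ([] : List α) ∈ listsLengthLE α (k + 1) := by simp
  rw [← insert_erase hnil, sum_insert (notMem_erase _ _), ← sum_product']
  congr 1
  symm
  refine sum_bij (fun x _ => x.1 ++ [x.2]) ?_ ?_ ?_ fun _ _ => rfl
  · intro x hx
    simp_all
  · intro x _ y _ hxy
    exact Prod.ext_iff.mpr (List.append_singleton_inj.mp hxy)
  · intro Q hQ
    obtain ⟨hQnil, -⟩ := mem_erase.mp hQ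
    obtain ⟨P, c, rfl⟩ := Q.eq_nil_or_concat'.resolve_left hQnil
    exact ⟨(P, c), by simp_all, rfl⟩

theorem finsum_sub_sum_append_singleton [Fintype α] {M : Type*} [AddCommGroup M]
    (f : List α → M) (m : ℕ) (hf : ∀ Q : List α, m < Q.length → f Q = 0) :
    ∑ᶠ P : List α, (f P - ∑ c, f (P ++ [c])) = f [] := by
  have hsupp : Function.support (fun P : List α => f P - ∑ c, f (P ++ [c])) ⊆
      listsLengthLE α m := by
    intro P hP
    by_contra hPm
    rw [mem_coe, mem_listsLengthLE, not_le] at hPm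
    exact hP (by simp [hf P hPm, fun c => hf (P ++ [c]) (by simp; omega)])
  have hsucc : ∑ Q ∈ listsLengthLE α (m + 1), f Q = ∑ Q ∈ listsLengthLE α m, f Q := by
    refine (sum_subset (fun Q hQ => ?_) fun Q _ hQm => hf Q ?_).symm
    · simp only [mem_listsLengthLE] at hQ ⊢; omega
    · simpa using hQm
  rw [finsum_eq_finsetSum_of_support_subset _ hsupp, sum_sub_distrib,
    ← hsucc, sum_listsLengthLE_succ, add_sub_cancel_right]

theorem matchProb_eq_zero_of_lt_add_length {n : ℕ} {p : ℕ → α → ℝ} {Q : List α} {j : ℕ}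
    (hQ : Q ≠ []) (hlen : n + 1 < j + Q.length) : matchProb n p Q j = 0 := by
  induction Q generalizing j with
  | nil => contradiction
  | cons c Q ih =>
    rw [matchProb, ite_eq_right_iff]
    intro hj
    cases Q with
    | nil => simp at hlen; omega
    | cons d Q => rw [ih (List.cons_ne_nil _ _) (by simp at hlen ⊢; omega), mul_zero]

theorem sum_multiplicities_eq_floor_general [Fintype α]
    (n : ℕ) (p : ℕ → α → ℝ) (z : ℝ)
    (i : ℕ) :
    ∑ᶠ P : List α,
      (⌊z * matchProb n p P i⌋ - ∑ c : α, ⌊z * matchProb n p (P ++ [c]) i⌋) = ⌊z⌋ := by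
  refine (finsum_sub_sum_append_singleton _ (n + 1 - i) fun Q hQ => ?_).trans (by simp [matchProb])
  rw [matchProb_eq_zero_of_lt_add_length (List.ne_nil_of_length_pos (by omega)) (by omega), mul_zero,
    Int.floor_zero]

/-- the total multiplicity of the multiset `M_i` equals `⌊z⌋`:
`Σ_P m_i(P) = ⌊z⌋`. -/
theorem sum_multiplicities_eq_floor [Fintype α]
    (n : ℕ) (p : ℕ → α → ℝ) (hp : IsWeighted n p) (z : ℝ) (hz : 1 ≤ z)
    (i : ℕ) (hi1 : 1 ≤ i) (hin : i ≤ n) :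
    ∑ᶠ P : List α,
      (⌊z * matchProb n p P i⌋ - ∑ c : α, ⌊z * matchProb n p (P ++ [c]) i⌋) = ⌊z⌋ :=
  sum_multiplicities_eq_floor_general n p z i
end

section
/- Let Σ be a nonempty finite alphabet and let Q_1, Q_2, …, Q_n, Q_{n+1} be strings over Σ with Q_{n+1} = ε such that for each 1 ≤ i ≤ n the string Q_i is compatible with Q_{i+1}. Then there exist a string S of length n over Σ and a property array π (satisfying π[i] ∈ {i−1,…,n} and π[1] ≤ ⋯ ≤ π[n]) such that S[i..π[i]] = Q_i for every 1 ≤ i ≤ n (where S[i..π[i]] denotes the empty string when π[i] = i−1). -/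
open scoped Classical
open Finset

variable {α : Type*}

/-- a chain `Q_1,…,Q_n,Q_{n+1} = ε` of subsequently compatible strings can
be realised as a string `S` of length `n` together with a property array `π` with
`S[i..π[i]] = Q_i` for all `i ∈ {1,…,n}`. -/
theorem chain_realisable_as_string_with_property [Nonempty α]
    (n : ℕ) (Q : ℕ → List α) (hend : Q (n + 1) = [])
    (hcomp : ∀ i, 1 ≤ i → i ≤ n → Compatible (Q i) (Q (i + 1))) :
    ∃ (S : List α) (π : ℕ → ℕ),
      S.length = n ∧ IsPropertyArray n π ∧
      ∀ i, 1 ≤ i → i ≤ n → factor S i (π i) = Q i := by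
  classical
  obtain ⟨c0⟩ := ‹Nonempty α›
  set S : List α := List.ofFn (fun j : Fin n => (Q ((j : ℕ) + 1)).headD c0) with hS
  have hlen : S.length = n := by simp [hS]
  -- main lemma by downward induction
  have key : ∀ m i, 1 ≤ i → i + m = n + 1 →
      i + (Q i).length ≤ n + 1 ∧ (S.drop (i - 1)).take (Q i).length = Q i := by
    intro m
    induction m with
    | zero =>
      intro i hi1 him
      have : i = n + 1 := by omega
      subst this
      simp [hend]
    | succ m ih =>
      intro i hi1 him
      have hin : i ≤ n := by omega
      obtain ⟨hb, hp⟩ := ih (i + 1) (by omega) (by omega)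
      rcases hcomp i hi1 hin with h0 | ⟨c, Q', hpre, hQ⟩
      · simp [h0]; omega
      · have hQ'len : Q'.length ≤ (Q (i + 1)).length := hpre.length_le
        constructor
        · rw [hQ]; simp only [List.length_cons]; omega
        · have hi1lt : i - 1 < S.length := by omega
          have hdropS : S.drop (i - 1) = S[i - 1] :: S.drop i := by
            have h2 : i - 1 + 1 = i := by omega
            rw [List.drop_eq_getElem_cons hi1lt, h2]
          have hget : S[i - 1] = c := by
            have : S[i-1] = (Q ((i-1 : ℕ) + 1)).headD c0 := by
              simp [hS]
            rw [this]
            have : i - 1 + 1 = i := by omega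
            rw [this, hQ]
            rfl
          have hdrop1 : S.drop ((i + 1) - 1) = S.drop i := by norm_num
          rw [hdrop1] at hp
          have hpre2 : Q' <+: S.drop i := by
            refine hpre.trans ?_
            rw [← hp]
            exact List.take_prefix _ _
          rw [hQ, hdropS, hget]
          simp only [List.length_cons, List.take_succ_cons]
          congr 1
            
          exact (List.prefix_iff_eq_take.mp hpre2).symm
  refine ⟨S, fun i => i - 1 + (Q i).length, hlen, ⟨?_, ?_⟩, ?_⟩
  · intro i hi1 hin
    have := (key (n + 1 - i) i hi1 (by omega)).1
    simp only []
    omega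
  · intro i hi1 hin
    have hlenle : (Q i).length ≤ (Q (i + 1)).length + 1 := by
      rcases hcomp i hi1 (by omega) with h0 | ⟨c, Q', hpre, hQ⟩
      · simp [h0]
      · rw [hQ]; simpa using hpre.length_le
    simp only []
    omega
  · intro i hi1 hin
    have hp := (key (n + 1 - i) i hi1 (by omega)).2
    have : i - 1 + (Q i).length + 1 - i = (Q i).length := by omega
    rw [factor, this]
    exact hp
end

section
/- Let X be a weighted sequence of length n over a finite alphabet Σ, let 0 < ε ≤ 1, set z = 1/ε ≥ 1, let z' > 0, set ℓ = ⌊z/z'⌋, and let S be a z-estimation of X. Then for every string P over Σ and every position i ∈ {1,…,n}: (1) if Count_S(P,i) ≥ ℓ then P_X(P,i) ≥ 1/z' − ε, and (2) if Count_S(P,i) < ℓ then P_X(P,i) < 1/z'. -/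
open scoped Classical
open Finset

variable {α : Type*}

/-- with `z = 1/ε` and `ℓ = ⌊z/z'⌋`, a `z`-estimation answers approximate
queries: `Count_𝒮(P,i) ≥ ℓ` implies `P_X(P,i) ≥ 1/z' − ε`, and `Count_𝒮(P,i) < ℓ`
implies `P_X(P,i) < 1/z'`. -/
theorem approx_index_correct [Fintype α]
    (n : ℕ) (p : ℕ → α → ℝ) (hp : IsWeighted n p) (ε : ℝ) (hε0 : 0 < ε) (hε1 : ε ≤ 1)
    (z : ℝ) (hzdef : z = 1 / ε) (z' : ℝ) (hz' : 0 < z')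
    (S : Fin ⌊z⌋₊ → List α) (π : Fin ⌊z⌋₊ → ℕ → ℕ)
    (hlen : ∀ j, (S j).length = n) (hπ : ∀ j, IsPropertyArray n (π j))
    (hest : ∀ (P : List α) (i : ℕ), 1 ≤ i → i ≤ n →
      countOcc S π P i = ⌊z * matchProb n p P i⌋₊) :
    ∀ (P : List α) (i : ℕ), 1 ≤ i → i ≤ n →
      (⌊z / z'⌋₊ ≤ countOcc S π P i → 1 / z' - ε ≤ matchProb n p P i) ∧
      (countOcc S π P i < ⌊z / z'⌋₊ → matchProb n p P i < 1 / z') := by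
  have hz0 : 0 < z := by rw [hzdef]; positivity
  have hez1 : ε * z = 1 := by rw [hzdef]; field_simp
  have hqnn : ∀ (P : List α) (i : ℕ), 1 ≤ i → 0 ≤ matchProb n p P i := by
    intro P
    induction P with
    | nil => intro i _; simp [matchProb]
    | cons c P ih =>
      intro i hi
      simp only [matchProb]
      split
      · exact mul_nonneg ((hp i hi (by assumption)).1 c) (ih (i + 1) (by omega))
      · exact le_refl 0
  intro P i hi hin
  set q := matchProb n p P i with hqdef
  have hq0 : 0 ≤ q := hqnn P i hi
  rw [hest P i hi hin]
  constructor
  · intro h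
    have h1 : (⌊z / z'⌋₊ : ℝ) ≤ (⌊z * q⌋₊ : ℝ) := Nat.cast_le.mpr h
    have h2 : (⌊z * q⌋₊ : ℝ) ≤ z * q := Nat.floor_le (by positivity)
    have h3 : z / z' - 1 < (⌊z / z'⌋₊ : ℝ) := Nat.sub_one_lt_floor _
    have key : z * (1 / z' - ε) < z * q := by
      have he : z * (1 / z' - ε) = z / z' - 1 := by
        field_simp
        nlinarith [hez1]
      linarith
    exact le_of_lt ((mul_lt_mul_iff_right₀ hz0).mp key)
  · intro h
    have h1 : (⌊z * q⌋₊ : ℝ) + 1 ≤ (⌊z / z'⌋₊ : ℝ) := by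
      have h' : ⌊z * q⌋₊ + 1 ≤ ⌊z / z'⌋₊ := h
      exact_mod_cast Nat.cast_le (α := ℝ) |>.mpr h'
    have h2 : z * q < (⌊z * q⌋₊ : ℝ) + 1 := Nat.lt_floor_add_one _
    have h3 : (⌊z / z'⌋₊ : ℝ) ≤ z / z' := Nat.floor_le (by positivity)
    have key : z * q < z * (1 / z') := by
      rw [mul_one_div]; linarith
    exact (mul_lt_mul_iff_right₀ hz0).mp key
end

section
/- Let X be a weighted sequence of length n ≥ 1 over a finite alphabet Σ, let ε ∈ (0, 1/2] and c > 0 be reals, and let k be a positive integer with k ≥ (c+2)·ε^{−2}·ln(n/ε). Let S_1,…,S_k be independent random strings drawn from the product distribution determined by X. Then with probability at least 1 − (ε/n)^c, for every position i ∈ {1,…,n} and every string P with P_X(P,i) ≥ ε: |P_X(P,i) − (1/k)·#{j ∈ {1,…,k} : S_j[i..i+|P|−1] = P}| ≤ ε. -/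
open scoped Classical
open Finset

variable {α : Type*}

/-!
For a fixed position `i` and pattern `P`, the indicator that a random string matches `P` at `i`
is a Bernoulli variable of mean `P_X(P,i)`, so by Hoeffding's inequality the frequency of `P` at
`i` among `k` independent samples is off by more than `ε` with probability at most
`2 exp(-2kε²)`. The matching events of distinct patterns of one length are disjoint, hence at
each position at most `1/ε` patterns of each length `≤ n` have probability `≥ ε`. A union bound
over these at most `n (n + 1) / ε` pairs `(i, P)` and the choice of `k` give the failure
probability `(ε/n)^c`.

Probabilities are finite sums: the event `A` of a `k`-tuple of samples has probability
`∑ T ∈ A, ∏ j, w (T j)` when each sample has law `w`.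
-/

section UnionBound

variable {β ι : Type*} {s : Finset β} {g : β → ℝ}

theorem sum_filter_le_add_of_imp_or {p q r : β → Prop} [DecidablePred p] [DecidablePred q]
    [DecidablePred r] (hg : ∀ x ∈ s, 0 ≤ g x) (h : ∀ x ∈ s, p x → q x ∨ r x) :
    ∑ x ∈ s.filter p, g x ≤ ∑ x ∈ s.filter q, g x + ∑ x ∈ s.filter r, g x := by
  simp only [sum_filter, ← sum_add_distrib]
  refine sum_le_sum fun x hx => ?_
  have := hg x hx
  have := h x hx
  split_ifs <;> simp_all

theorem sum_filter_le_sum_sum_filter_of_imp_exists {p : β → Prop} {q : ι → β → Prop}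
    [DecidablePred p] [∀ e, DecidablePred (q e)] (t : Finset ι) (hg : ∀ x ∈ s, 0 ≤ g x)
    (h : ∀ x ∈ s, p x → ∃ e ∈ t, q e x) :
    ∑ x ∈ s.filter p, g x ≤ ∑ e ∈ t, ∑ x ∈ s.filter (q e), g x := by
  simp only [sum_filter]
  rw [sum_comm]
  refine sum_le_sum fun x hx => ?_
  have hterm (e : ι) : 0 ≤ if q e x then g x else 0 := by split_ifs <;> simp [hg x hx]
  split_ifs with hp
  · obtain ⟨e, he, hq⟩ := h x hx hp
    calc g x = if q e x then g x else 0 := (if_pos hq).symm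
      _ ≤ ∑ e ∈ t, if q e x then g x else 0 :=
          single_le_sum (f := fun e => if q e x then g x else 0) (fun e _ => hterm e) he
  · exact sum_nonneg fun e _ => hterm e

end UnionBound

section FiniteProbability

open MeasureTheory ProbabilityTheory

variable {Ω : Type*} [Fintype Ω]

theorem integral_sum_smul_dirac [MeasurableSpace Ω] [MeasurableSingletonClass Ω]
    (w : Ω → ℝ) (hw : ∀ S, 0 ≤ w S) (g : Ω → ℝ) :
    ∫ S, g S ∂(∑ S, ENNReal.ofReal (w S) • Measure.dirac S) = ∑ S, w S * g S := by
  rw [integral_finsetSum_measure fun S _ =>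
    (integrable_dirac enorm_lt_top).smul_measure ENNReal.ofReal_ne_top]
  simp [integral_smul_measure, integral_dirac, ENNReal.toReal_ofReal (hw _)]

/-- Hoeffding's lemma for the distribution `w`. -/
theorem sum_mul_exp_le_of_mem_Icc (w : Ω → ℝ) (hw0 : ∀ S, 0 ≤ w S) (hw1 : ∑ S, w S = 1)
    (f : Ω → ℝ) (hf : ∀ S, f S ∈ Set.Icc 0 1) (t : ℝ) :
    ∑ S, w S * Real.exp (t * (f S - ∑ S, w S * f S)) ≤ Real.exp (t ^ 2 / 8) := by
  let : MeasurableSpace Ω := ⊤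
  set μ : Measure Ω := ∑ S, ENNReal.ofReal (w S) • Measure.dirac S
  have hμ : IsProbabilityMeasure μ := ⟨by
    simp [μ, ← ENNReal.ofReal_sum_of_nonneg fun S _ => hw0 S, hw1]⟩
  have hoeffding := (hasSubgaussianMGF_of_mem_Icc (μ := μ) (X := f) (a := 0) (b := 1)
    (by fun_prop) (ae_of_all _ hf)).mgf_le t
  simp only [mgf, integral_sum_smul_dirac w hw0, μ] at hoeffding
  convert hoeffding using 2
  norm_num
  ring

theorem sum_prod_filter_mean_add_le_exp (w : Ω → ℝ) (hw0 : ∀ S, 0 ≤ w S) (hw1 : ∑ S, w S = 1)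
    (f : Ω → ℝ) (hf : ∀ S, f S ∈ Set.Icc 0 1) (k : ℕ) {ε : ℝ} (hε : 0 ≤ ε) :
    ∑ T ∈ univ.filter (fun T : Fin k → Ω => (∑ S, w S * f S + ε) * k ≤ ∑ j, f (T j)),
      ∏ j, w (T j) ≤ Real.exp (-2 * k * ε ^ 2) := by
  set m := ∑ S, w S * f S
  -- Chernoff's bound with the tilt `t = 4ε`, which minimises `-tε + t²/8`.
  set t := 4 * ε with ht
  have hW0 (T : Fin k → Ω) : 0 ≤ ∏ j, w (T j) := prod_nonneg fun j _ => hw0 (T j)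
  have hmarkov (T : Fin k → Ω) (hT : (m + ε) * k ≤ ∑ j, f (T j)) :
      1 ≤ Real.exp (-(t * ε * k)) * ∏ j, Real.exp (t * (f (T j) - m)) := by
    rw [← Real.exp_sum, ← Real.exp_add, Real.one_le_exp_iff]
    simp only [← mul_sum, sum_sub_distrib, sum_const, card_univ, Fintype.card_fin, nsmul_eq_mul]
    nlinarith
  calc ∑ T ∈ univ.filter (fun T : Fin k → Ω => (m + ε) * k ≤ ∑ j, f (T j)), ∏ j, w (T j)
      ≤ ∑ T ∈ univ.filter (fun T : Fin k → Ω => (m + ε) * k ≤ ∑ j, f (T j)),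
          Real.exp (-(t * ε * k)) * ∏ j, w (T j) * Real.exp (t * (f (T j) - m)) := by
        refine sum_le_sum fun T hT => ?_
        rw [prod_mul_distrib, mul_left_comm]
        exact le_mul_of_one_le_right (hW0 T) (hmarkov T (mem_filter.1 hT).2)
    _ ≤ ∑ T : Fin k → Ω, Real.exp (-(t * ε * k)) * ∏ j, w (T j) * Real.exp (t * (f (T j) - m)) :=
        sum_le_sum_of_subset_of_nonneg (filter_subset _ _) fun T _ _ =>
          mul_nonneg (Real.exp_pos _).le
            (prod_nonneg fun j _ => mul_nonneg (hw0 _) (Real.exp_pos _).le)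
    _ = Real.exp (-(t * ε * k)) * (∑ S, w S * Real.exp (t * (f S - m))) ^ k := by
        rw [← mul_sum, Fintype.sum_pow]
    _ ≤ Real.exp (-(t * ε * k)) * Real.exp (t ^ 2 / 8) ^ k := by
        gcongr
        · exact sum_nonneg fun S _ => mul_nonneg (hw0 S) (Real.exp_pos _).le
        · exact sum_mul_exp_le_of_mem_Icc w hw0 hw1 f hf t
    _ = Real.exp (-2 * k * ε ^ 2) := by
        rw [← Real.exp_nat_mul, ← Real.exp_add, ht]
        ring_nf

theorem sum_prod_filter_lt_abs_mean_sub_le (w : Ω → ℝ) (hw0 : ∀ S, 0 ≤ w S)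
    (hw1 : ∑ S, w S = 1) (f : Ω → ℝ) (hf : ∀ S, f S ∈ Set.Icc 0 1) {k : ℕ} (hk : 0 < k) {ε : ℝ}
    (hε : 0 ≤ ε) :
    ∑ T ∈ univ.filter (fun T : Fin k → Ω => ε < |∑ S, w S * f S - (∑ j, f (T j)) / k|),
      ∏ j, w (T j) ≤ 2 * Real.exp (-2 * k * ε ^ 2) := by
  have h1f (S : Ω) : 1 - f S ∈ Set.Icc 0 1 := ⟨by linarith [(hf S).2], by linarith [(hf S).1]⟩
  have hcompl : ∑ S, w S * (1 - f S) = 1 - ∑ S, w S * f S := by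
    simp only [mul_sub, mul_one, sum_sub_distrib, hw1]
  have hk' : (0 : ℝ) < k := Nat.cast_pos.2 hk
  -- the lower tail of `f` is the upper tail of `1 - f`
  refine (sum_filter_le_add_of_imp_or (fun T _ => prod_nonneg fun j _ => hw0 (T j))
    fun T _ hT => ?_).trans (two_mul (Real.exp _) ▸ add_le_add
      (sum_prod_filter_mean_add_le_exp w hw0 hw1 f hf k hε)
      (sum_prod_filter_mean_add_le_exp w hw0 hw1 _ h1f k hε))
  simp only [lt_abs, hcompl, sum_sub_distrib, sum_const, card_univ, Fintype.card_fin,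
    nsmul_eq_mul, mul_one] at hT ⊢
  rcases hT with hT | hT
  · have := (div_lt_iff₀ hk').1 (show (∑ j, f (T j)) / k < ∑ S, w S * f S - ε by linarith)
    right
    linarith
  · have := (lt_div_iff₀ hk').1 (show ∑ S, w S * f S + ε < (∑ j, f (T j)) / k by linarith)
    left
    linarith

theorem sum_sum_le_one_of_pairwiseDisjoint {β : Type*} {w : Ω → ℝ} (hw0 : ∀ S, 0 ≤ w S)
    (hw1 : ∑ S, w S = 1) {H : Finset β} {E : β → Finset Ω}
    (hE : (H : Set β).PairwiseDisjoint E) : ∑ P ∈ H, ∑ S ∈ E P, w S ≤ 1 := by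
  rw [← sum_biUnion hE, ← hw1]
  exact sum_le_sum_of_subset_of_nonneg (subset_univ _) fun S _ _ => hw0 S

end FiniteProbability

section ProductWeights

variable {ι κ : Type*} [Fintype ι] [Fintype κ] [DecidableEq κ] [Fintype α]

theorem sum_prod_eq_one (q : κ → α → ℝ) (hq : ∀ j, ∑ c, q j c = 1) :
    ∑ S : κ → α, ∏ j, q j (S j) = 1 := by
  rw [← Fintype.prod_sum]
  exact prod_eq_one fun j _ => hq j

theorem sum_prod_filter_comp_eq (q : κ → α → ℝ) (hq : ∀ j, ∑ c, q j c = 1) {e : ι → κ}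
    (he : Function.Injective e) (v : ι → α) :
    ∑ S ∈ univ.filter (fun S : κ → α => ∀ t, S (e t) = v t), ∏ j, q j (S j) =
      ∏ t, q (e t) (v t) := by
  set A : κ → Finset α := fun j => univ.filter fun c => ∀ t, e t = j → c = v t
  have hpi : univ.filter (fun S : κ → α => ∀ t, S (e t) = v t) = Fintype.piFinset A := by
    ext S
    simp only [mem_filter, mem_univ, true_and, Fintype.mem_piFinset, A]
    exact ⟨fun h j t hj => hj ▸ h t, fun h t => h _ t rfl⟩
  have hA (t : ι) : A (e t) = {v t} := by
    ext c
    simp [A, he.eq_iff]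
  have hA' (j : κ) (hj : j ∉ univ.image e) : A j = univ := by
    ext c
    simp_all [A]
  rw [hpi, ← prod_univ_sum, ← prod_subset (subset_univ (univ.image e)) fun j _ hj => by
    rw [hA' j hj, hq], prod_image he.injOn]
  simp [hA]

end ProductWeights

section WeightedSequences

variable {n : ℕ} {p : ℕ → α → ℝ} {P : List α} {i : ℕ}

theorem matchProb_eq_prod (hi : 1 ≤ i) (h : i - 1 + P.length ≤ n) :
    matchProb n p P i = ∏ t : Fin P.length, p (i + t) P[t] := by
  induction P generalizing i with
  | nil => simp [matchProb]
  | cons c P ih =>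
    simp only [List.length_cons] at h
    rw [matchProb, if_pos (by omega), ih (i := i + 1) (by omega) (by omega)]
    simp [Fin.prod_univ_succ, Nat.add_right_comm, Nat.add_assoc]

theorem matchProb_eq_zero_of_lt (hi : i ≤ n + 1) (h : n + 1 < i + P.length) :
    matchProb n p P i = 0 := by
  induction P generalizing i with
  | nil => simp at h; omega
  | cons c P ih =>
    simp only [List.length_cons] at h
    rw [matchProb]
    split_ifs with hin
    · rw [ih (i := i + 1) (by omega) (by omega), mul_zero]
    · rfl

theorem add_length_le_of_le_matchProb {ε : ℝ} (hε : 0 < ε) (hi : 1 ≤ i) (hin : i ≤ n)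
    (hP : ε ≤ matchProb n p P i) : i - 1 + P.length ≤ n := by
  by_contra h
  rw [matchProb_eq_zero_of_lt (by omega) (by omega)] at hP
  linarith

theorem matches_iff {S : Fin n → α} (h : i - 1 + P.length ≤ n) :
    Matches S P i ↔ ∀ t : Fin P.length, S (Fin.castLE h (Fin.natAdd (i - 1) t)) = P[t] := by
  rw [Matches, List.ext_getElem_iff]
  simp only [List.length_take, List.length_drop, List.length_ofFn, List.getElem_take,
    List.getElem_drop, List.getElem_ofFn]
  refine ⟨fun ⟨_, h'⟩ t => ?_, fun h' => ⟨by omega, fun t _ ht => ?_⟩⟩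
  · exact h' t (by omega) t.2
  · exact h' ⟨t, ht⟩

theorem eq_of_matches {S : Fin n → α} {Q : List α} (hP : Matches S P i) (hQ : Matches S Q i)
    (h : P.length = Q.length) : P = Q := by
  rw [← hP, ← hQ, h]

variable [Fintype α]

theorem IsWeighted.nonneg_succ (hp : IsWeighted n p) (j : Fin n) (c : α) : 0 ≤ p (j + 1) c :=
  (hp (j + 1) (by omega) j.2).1 c

theorem IsWeighted.sum_succ_eq_one (hp : IsWeighted n p) (j : Fin n) : ∑ c, p (j + 1) c = 1 :=
  (hp (j + 1) (by omega) j.2).2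

theorem strWeight_nonneg (hp : IsWeighted n p) (S : Fin n → α) : 0 ≤ strWeight n p S :=
  prod_nonneg fun j _ => hp.nonneg_succ j (S j)

theorem sum_strWeight (hp : IsWeighted n p) : ∑ S, strWeight n p S = 1 :=
  sum_prod_eq_one (fun (j : Fin n) c => p (j + 1) c) hp.sum_succ_eq_one

theorem sum_strWeight_filter_matches (hp : IsWeighted n p) (hi : 1 ≤ i)
    (h : i - 1 + P.length ≤ n) :
    ∑ S ∈ univ.filter (fun S : Fin n → α => Matches S P i), strWeight n p S =
      matchProb n p P i := by
  rw [filter_congr fun S _ => matches_iff h, matchProb_eq_prod hi h]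
  -- `convert` also identifies the two decidability instances of the `∀ t` filter predicate.
  convert (sum_prod_filter_comp_eq (fun (j : Fin n) c => p (j + 1) c) hp.sum_succ_eq_one
    (e := fun t => Fin.castLE h (Fin.natAdd (i - 1) t))
    ((Fin.castLE_injective h).comp (Fin.natAdd_injective _ _)) (fun t => P[t])) using 3
  · rfl
  · simp only [Fin.val_castLE, Fin.val_natAdd]
    omega

theorem sum_prod_filter_lt_abs_matchProb_sub_le (hp : IsWeighted n p) (hi : 1 ≤ i)
    (h : i - 1 + P.length ≤ n) {k : ℕ} (hk : 0 < k) {ε : ℝ} (hε : 0 ≤ ε) :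
    ∑ T ∈ univ.filter (fun T : Fin k → Fin n → α => ε < |matchProb n p P i -
        (#(univ.filter fun j : Fin k => Matches (T j) P i) : ℝ) / k|),
      ∏ j, strWeight n p (T j) ≤ 2 * Real.exp (-2 * k * ε ^ 2) := by
  have hmean : ∑ S, strWeight n p S * (if Matches S P i then 1 else 0) = matchProb n p P i := by
    simp only [mul_ite, mul_one, mul_zero]
    rw [← sum_filter]
    exact sum_strWeight_filter_matches hp hi h
  have hcount (T : Fin k → Fin n → α) :
      ∑ j, (if Matches (T j) P i then (1 : ℝ) else 0) =
        #(univ.filter fun j : Fin k => Matches (T j) P i) := by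
    rw [sum_boole]
  simpa only [hmean, hcount] using sum_prod_filter_lt_abs_mean_sub_le (strWeight n p)
    (strWeight_nonneg hp) (sum_strWeight hp) (fun S => if Matches S P i then 1 else 0)
    (fun S => by split_ifs <;> simp) hk hε

end WeightedSequences

section HeavyPatterns

variable [Fintype α] {n : ℕ} {p : ℕ → α → ℝ} {ε : ℝ} {i : ℕ}

theorem card_mul_le_one_of_le_matchProb (hp : IsWeighted n p) (hε : 0 < ε) (hi : 1 ≤ i)
    (hin : i ≤ n) {L : ℕ} {H : Finset (List α)}
    (hH : ∀ P ∈ H, P.length = L ∧ ε ≤ matchProb n p P i) : #H * ε ≤ 1 := by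
  have hdisj : (H : Set (List α)).PairwiseDisjoint
      fun P => univ.filter fun S : Fin n → α => Matches S P i := by
    intro P hP Q hQ hPQ
    refine disjoint_filter.2 fun S _ hSP hSQ => hPQ (eq_of_matches hSP hSQ ?_)
    rw [(hH P hP).1, (hH Q hQ).1]
  calc #H * ε = ∑ _P ∈ H, ε := by rw [sum_const, nsmul_eq_mul]
    _ ≤ ∑ P ∈ H, matchProb n p P i := sum_le_sum fun P hP => (hH P hP).2
    _ = ∑ P ∈ H, ∑ S ∈ univ.filter (fun S : Fin n → α => Matches S P i), strWeight n p S :=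
        sum_congr rfl fun P hP => (sum_strWeight_filter_matches hp hi
          (add_length_le_of_le_matchProb hε hi hin (hH P hP).2)).symm
    _ ≤ 1 := sum_sum_le_one_of_pairwiseDisjoint (strWeight_nonneg hp) (sum_strWeight hp) hdisj

variable (n p ε i) in
noncomputable def heavyPatterns : Finset (List α) :=
  (List.finite_length_le α n).toFinset.filter fun P => ε ≤ matchProb n p P i

theorem mem_heavyPatterns (hε : 0 < ε) (hi : 1 ≤ i) (hin : i ≤ n) {P : List α} :
    P ∈ heavyPatterns n p ε i ↔ ε ≤ matchProb n p P i := by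
  rw [heavyPatterns, mem_filter, Set.Finite.mem_toFinset, and_iff_right_iff_imp]
  intro hP
  have := add_length_le_of_le_matchProb hε hi hin hP
  change P.length ≤ n
  omega

theorem card_heavyPatterns_le (hp : IsWeighted n p) (hε : 0 < ε) (hi : 1 ≤ i) (hin : i ≤ n) :
    (#(heavyPatterns n p ε i) : ℝ) ≤ (n + 1) / ε := by
  rw [card_eq_sum_card_fiberwise (s := heavyPatterns n p ε i) (f := List.length)
    (t := range (n + 1)) fun P hP => mem_range.2 (Nat.lt_succ_of_le
      ((List.finite_length_le α n).mem_toFinset.1 (mem_filter.1 hP).1)), le_div_iff₀ hε]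
  push_cast
  rw [sum_mul]
  calc ∑ L ∈ range (n + 1), (#((heavyPatterns n p ε i).filter (·.length = L)) : ℝ) * ε
      ≤ ∑ _L ∈ range (n + 1), (1 : ℝ) :=
        sum_le_sum fun L _ => card_mul_le_one_of_le_matchProb hp hε hi hin fun P hP => by
          rw [mem_filter, mem_heavyPatterns hε hi hin] at hP
          exact hP.symm
    _ = n + 1 := by simp

theorem card_sigma_heavyPatterns_le (hp : IsWeighted n p) (hε : 0 < ε) :
    (#((Icc 1 n).sigma (heavyPatterns n p ε)) : ℝ) ≤ n * ((n + 1) / ε) := by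
  rw [card_sigma, Nat.cast_sum]
  calc ∑ i ∈ Icc 1 n, (#(heavyPatterns n p ε i) : ℝ) ≤ ∑ _i ∈ Icc 1 n, (n + 1) / ε :=
        sum_le_sum fun i hi => card_heavyPatterns_le hp hε (mem_Icc.1 hi).1 (mem_Icc.1 hi).2
    _ = n * ((n + 1) / ε) := by simp

variable (n p ε) in
def EstimatesHeavyPatterns {k : ℕ} (T : Fin k → Fin n → α) : Prop :=
  ∀ i, 1 ≤ i → i ≤ n → ∀ P : List α, ε ≤ matchProb n p P i →
    |matchProb n p P i - (#(univ.filter fun j : Fin k => Matches (T j) P i) : ℝ) / k| ≤ ε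

theorem sum_prod_filter_not_estimatesHeavyPatterns_le (hp : IsWeighted n p) (hε : 0 < ε)
    {k : ℕ} (hk : 0 < k) :
    ∑ T ∈ univ.filter (fun T : Fin k → Fin n → α => ¬ EstimatesHeavyPatterns n p ε T),
      ∏ j, strWeight n p (T j) ≤ n * ((n + 1) / ε) * (2 * Real.exp (-2 * k * ε ^ 2)) := by
  calc _ ≤ ∑ e ∈ (Icc 1 n).sigma (heavyPatterns n p ε),
        ∑ T ∈ univ.filter (fun T : Fin k → Fin n → α => ε < |matchProb n p e.2 e.1 -
          (#(univ.filter fun j : Fin k => Matches (T j) e.2 e.1) : ℝ) / k|),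
        ∏ j, strWeight n p (T j) := by
        refine sum_filter_le_sum_sum_filter_of_imp_exists _
          (fun T _ => prod_nonneg fun j _ => strWeight_nonneg hp (T j)) fun T _ hT => ?_
        simp only [EstimatesHeavyPatterns, not_forall, not_le, exists_prop] at hT
        obtain ⟨i, hi, hin, P, hP, hdev⟩ := hT
        exact ⟨⟨i, P⟩, mem_sigma.2 ⟨mem_Icc.2 ⟨hi, hin⟩, (mem_heavyPatterns hε hi hin).2 hP⟩, hdev⟩
    _ ≤ ∑ _e ∈ (Icc 1 n).sigma (heavyPatterns n p ε), 2 * Real.exp (-2 * k * ε ^ 2) := by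
        refine sum_le_sum fun e he => ?_
        obtain ⟨hi, hP⟩ := mem_sigma.1 he
        rw [mem_Icc] at hi
        exact sum_prod_filter_lt_abs_matchProb_sub_le hp hi.1
          (add_length_le_of_le_matchProb hε hi.1 hi.2 ((mem_heavyPatterns hε hi.1 hi.2).1 hP))
          hk hε.le
    _ ≤ n * ((n + 1) / ε) * (2 * Real.exp (-2 * k * ε ^ 2)) := by
        rw [sum_const, nsmul_eq_mul]
        gcongr
        exact card_sigma_heavyPatterns_le hp hε

end HeavyPatterns

theorem mul_div_mul_exp_le_rpow {n : ℕ} (hn : 1 ≤ n) {ε c : ℝ} (hε0 : 0 < ε) (hε1 : ε ≤ 1 / 2)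
    (hc : 0 ≤ c) {k : ℕ} (hk : (c + 2) * ε⁻¹ ^ 2 * Real.log (n / ε) ≤ k) :
    n * ((n + 1) / ε) * (2 * Real.exp (-2 * k * ε ^ 2)) ≤ (ε / n) ^ c := by
  have hn' : (1 : ℝ) ≤ n := Nat.one_le_cast.2 hn
  set r := ε / n
  have hr0 : 0 < r := by positivity
  have hr1 : r ≤ 1 := (div_le_self hε0.le hn').trans (by linarith)
  have hlog : Real.log (n / ε) = -Real.log r := by rw [← Real.log_inv, inv_div]
  have hkε : (c + 2) * Real.log (n / ε) ≤ k * ε ^ 2 := by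
    have := mul_le_mul_of_nonneg_right hk (sq_nonneg ε)
    rwa [inv_pow, mul_right_comm _ _ (Real.log _), inv_mul_cancel_right₀ (by positivity)] at this
  -- The bound on `k` gives `exp(-2kε²) ≤ r ^ (2c + 4)`; the spare factor `r ^ (c + 4)` absorbs
  -- the count `n (n + 1) / ε` of the union bound.
  have hexp : Real.exp (-2 * k * ε ^ 2) ≤ r ^ 4 * r ^ c * r ^ c := by
    rw [Real.rpow_def_of_pos hr0, ← Real.exp_log (pow_pos hr0 4), Real.log_pow, ← Real.exp_add,
      ← Real.exp_add, Real.exp_le_exp]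
    push_cast
    nlinarith
  have hsmall : n * ((n + 1) / ε) * (2 * r ^ 4) ≤ 1 := by
    have hε3 : ε ^ 3 ≤ 1 / 8 := by nlinarith [pow_le_pow_left₀ hε0.le hε1 3]
    rw [show n * ((n + 1) / ε) * (2 * r ^ 4) = 2 * ((n + 1) / n) * (1 / n ^ 2) * ε ^ 3 by
      simp only [r]; field_simp]
    have h1 : (n + 1 : ℝ) / n ≤ 2 := by rw [div_le_iff₀ (by positivity)]; linarith
    have h2 : 1 / (n : ℝ) ^ 2 ≤ 1 := by rw [div_le_one (by positivity)]; nlinarith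
    have h3 : 0 ≤ 1 / (n : ℝ) ^ 2 := by positivity
    nlinarith [mul_le_mul h1 h2 h3 (by norm_num), pow_pos hε0 3]
  have hrc0 : 0 ≤ r ^ c := Real.rpow_nonneg hr0.le c
  calc _ ≤ n * ((n + 1) / ε) * (2 * (r ^ 4 * r ^ c * r ^ c)) := by gcongr
    _ = n * ((n + 1) / ε) * (2 * r ^ 4) * r ^ c * r ^ c := by ring
    _ ≤ 1 * 1 * r ^ c := by
        gcongr
        exact Real.rpow_le_one hr0.le hr1 hc
    _ = r ^ c := by ring

/-- sampling `k ≥ (c+2)·ε⁻²·ln(n/ε)` independent random strings from `X`,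
with probability at least `1 − (ε/n)^c`, for every position `i` and every string `P`
with `P_X(P,i) ≥ ε`, the empirical frequency is within `ε` of `P_X(P,i)`. -/
theorem random_sampling_estimates [Fintype α]
    (n : ℕ) (hn : 1 ≤ n) (p : ℕ → α → ℝ) (hp : IsWeighted n p)
    (ε c : ℝ) (hε0 : 0 < ε) (hε1 : ε ≤ 1 / 2) (hc : 0 < c) (k : ℕ) (hk : 0 < k)
    (hkbig : (c + 2) * ε⁻¹ ^ 2 * Real.log ((n : ℝ) / ε) ≤ (k : ℝ)) :
    1 - (ε / n) ^ c ≤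
      ∑ T ∈ Finset.univ.filter (fun T : Fin k → Fin n → α =>
          ∀ (i : ℕ), 1 ≤ i → i ≤ n → ∀ P : List α, ε ≤ matchProb n p P i →
            |matchProb n p P i -
              ((Finset.univ.filter fun j : Fin k => Matches (T j) P i).card : ℝ) / k|
              ≤ ε),
        ∏ j, strWeight n p (T j) := by
  have htotal : ∑ T : Fin k → Fin n → α, ∏ j, strWeight n p (T j) = 1 :=
    sum_prod_eq_one _ fun _ => sum_strWeight hp
  rw [← sum_filter_add_sum_filter_not univ (EstimatesHeavyPatterns n p ε)] at htotal
  have hbad := (sum_prod_filter_not_estimatesHeavyPatterns_le hp hε0 hk).trans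
    (mul_div_mul_exp_le_rpow hn hε0 hε1 hc.le hkbig)
  have hgood : 1 - (ε / n) ^ c ≤ ∑ T ∈ univ.filter (EstimatesHeavyPatterns n p ε),
      ∏ j : Fin k, strWeight n p (T j) := by
    linarith
  exact hgood.trans_eq (sum_congr (filter_congr fun T _ => Iff.rfl) fun _ _ => rfl)
end
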